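/- Assume C is complete with respect to its absolute value. Let Gamma be a subgroup of GL_2(A), alpha in Gamma, omega in C with |omega| = |omega|_i = q^r for some rational non-integer r, s in K, zeta in C with |zeta| = |zeta|_i = 1, and z_n = s + T^{-n} * zeta. Assume: (a) there are constants kappa, kappa' > 0 such that |s - gamma omega| >= kappa / |c*omega + d| and |s - gamma(alpha omega)| >= kappa' / |c*(alpha omega) + d| for every gamma = [[a,b],[c,d]] in Gamma; (b) the family gamma -> (s - gamma omega)/(s - gamma(alpha omega)), indexed by Gamma~ = Gamma/(Gamma ∩ Z), is multipliable with product P, and for each n the family gamma -> (z_n - gamma omega)/(z_n - gamma(alpha omega)) is multipliable with product P_n; (c) there is M > 0 with |P_n| <= M for all n. Then P_n converges to P as n -> infinity. (This is the analytic content of Theorem 5.1 of the paper: the value of the theta quotient u_alpha at the cusp s is given by the same infinite product evaluated at s.) -/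

import Mathlib

open Polynomial Matrix
open scoped Classical

/-- The absolute value on `K_∞ = F_q((π))`: `|x| = q^{-v_∞(x)}`. -/
noncomputable def absK (Fq : Type*) [Field Fq] [Fintype Fq] (x : LaurentSeries Fq) : ℝ :=
  if x = 0 then 0 else (Fintype.card Fq : ℝ) ^ (-(HahnSeries.order x))

/-- The imaginary part `|z|_i = inf {|z - x| : x ∈ K_∞}` of an element of `C`. -/
noncomputable def imNorm (Fq : Type*) [Field Fq] {C : Type*} [NormedField C]
    [Algebra (LaurentSeries Fq) C] (z : C) : ℝ :=
  ⨅ x : LaurentSeries Fq, ‖z - algebraMap (LaurentSeries Fq) C x‖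

/-- The element `T = π⁻¹` of `K_∞ = F_q((π))`. -/
noncomputable def Tel (Fq : Type*) [Field Fq] : LaurentSeries Fq :=
  HahnSeries.single (-1 : ℤ) 1

/-- The embedding `A = F_q[T] → C`, sending `T` to `π⁻¹`. -/
noncomputable def polyEmb (Fq : Type*) [Field Fq] (C : Type*) [NormedField C]
    [Algebra (LaurentSeries Fq) C] : Polynomial Fq →+* C :=
  (algebraMap (LaurentSeries Fq) C).comp (Polynomial.aeval (Tel Fq)).toRingHom

/-- The action of `γ ∈ GL₂(A)` on `C` by fractional linear transformations. -/
noncomputable def act {Fq : Type*} [Field Fq] {C : Type*} [NormedField C]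
    [Algebra (LaurentSeries Fq) C] (g : GL (Fin 2) (Polynomial Fq)) (z : C) : C :=
  (polyEmb Fq C (g.val 0 0) * z + polyEmb Fq C (g.val 0 1)) /
    (polyEmb Fq C (g.val 1 0) * z + polyEmb Fq C (g.val 1 1))

section Aux
variable {Fq : Type*} [Field Fq] [Fintype Fq] {C : Type*} [NormedField C]
  [Algebra (LaurentSeries Fq) C]

/-- ultrametric: if `‖x‖ < ‖y‖` then `‖x+y‖ = ‖y‖`. -/
lemma TV.una (hna : ∀ x y : C, ‖x + y‖ ≤ max ‖x‖ ‖y‖) {x y : C} (h : ‖x‖ < ‖y‖) :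
    ‖x + y‖ = ‖y‖ := by
  refine le_antisymm ((hna x y).trans_eq (max_eq_right h.le)) ?_
  have h2 : ‖y‖ ≤ max ‖x + y‖ ‖x‖ := by
    have := hna (x + y) (-x)
    simpa using this
  rcases max_cases ‖x + y‖ ‖x‖ with ⟨he, _⟩ | ⟨he, _⟩
  · rw [he] at h2; exact h2
  · rw [he] at h2; exact absurd (lt_of_le_of_lt h2 h) (lt_irrefl _)

lemma TV.unas (hna : ∀ x y : C, ‖x + y‖ ≤ max ‖x‖ ‖y‖) {x y : C} (h : ‖y‖ < ‖x‖) :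
    ‖x - y‖ = ‖x‖ := by
  have : x - y = -y + x := by ring
  rw [this, TV.una hna (by simpa using h)]

lemma TV.pe_apply (q : Polynomial Fq) :
    polyEmb Fq C q = algebraMap (LaurentSeries Fq) C (Polynomial.aeval (Tel Fq) q) := rfl

lemma TV.Tel_ne : (Tel Fq) ≠ 0 := HahnSeries.single_ne_zero one_ne_zero

lemma TV.norm_e (hext : ∀ x : LaurentSeries Fq, ‖algebraMap (LaurentSeries Fq) C x‖ = absK Fq x)
    {y : LaurentSeries Fq} (hy : y ≠ 0) :
    ‖algebraMap (LaurentSeries Fq) C y‖ = (Fintype.card Fq : ℝ) ^ ((-(HahnSeries.order y) : ℤ) : ℝ) := by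
  rw [hext, absK, if_neg hy, Real.rpow_intCast]

end Aux

section Aux2
set_option linter.unusedSectionVars false
variable {Fq : Type*} [Field Fq] [Fintype Fq] {C : Type*} [NormedField C]
  [Algebra (LaurentSeries Fq) C]

lemma TV.norm_peC (hext : ∀ x : LaurentSeries Fq, ‖algebraMap (LaurentSeries Fq) C x‖ = absK Fq x)
    {a : Fq} (ha : a ≠ 0) : ‖polyEmb Fq C (Polynomial.C a)‖ = 1 := by
  rw [TV.pe_apply, Polynomial.aeval_C]
  have h1 : (algebraMap Fq (LaurentSeries Fq)) a = HahnSeries.single (0 : ℤ) a := by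
    rw [HahnSeries.algebraMap_apply', PowerSeries.algebraMap_apply]
    simp [HahnSeries.ofPowerSeries_C]
  rw [h1, hext, absK, if_neg (HahnSeries.single_ne_zero ha), HahnSeries.order_single ha]
  norm_num

lemma TV.norm_peX (hext : ∀ x : LaurentSeries Fq, ‖algebraMap (LaurentSeries Fq) C x‖ = absK Fq x) :
    ‖polyEmb Fq C Polynomial.X‖ = (Fintype.card Fq : ℝ) := by
  rw [TV.pe_apply, Polynomial.aeval_X, hext, absK, if_neg TV.Tel_ne, Tel,
    HahnSeries.order_single one_ne_zero]
  norm_num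

lemma TV.norm_pe (hna : ∀ x y : C, ‖x + y‖ ≤ max ‖x‖ ‖y‖)
    (hext : ∀ x : LaurentSeries Fq, ‖algebraMap (LaurentSeries Fq) C x‖ = absK Fq x)
    {p : Polynomial Fq} (hp : p ≠ 0) :
    ‖polyEmb Fq C p‖ = (Fintype.card Fq : ℝ) ^ ((p.natDegree : ℝ)) := by
  have hQ1 : (1:ℝ) < (Fintype.card Fq : ℝ) := by exact_mod_cast Fintype.one_lt_card
  have hQ0 : (0:ℝ) < (Fintype.card Fq : ℝ) := lt_trans one_pos hQ1
  -- strong induction on natDegree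
  suffices h : ∀ (d : ℕ) (p : Polynomial Fq), p ≠ 0 → p.natDegree = d →
      ‖polyEmb Fq C p‖ = (Fintype.card Fq : ℝ) ^ ((p.natDegree : ℝ)) by
    exact h p.natDegree p hp rfl
  clear hp p
  intro d
  induction d using Nat.strong_induction_on with
  | _ d ih =>
    intro p hp hd
    have hlead : ‖polyEmb Fq C (Polynomial.C p.leadingCoeff * Polynomial.X ^ p.natDegree)‖
        = (Fintype.card Fq : ℝ) ^ ((p.natDegree : ℝ)) := by
      rw [_root_.map_mul, _root_.map_pow, norm_mul, norm_pow,
        TV.norm_peC hext (Polynomial.leadingCoeff_ne_zero.mpr hp),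
        TV.norm_peX hext, one_mul, ← Real.rpow_natCast]
    by_cases he0 : p.eraseLead = 0
    case pos =>
      have : p = Polynomial.C p.leadingCoeff * Polynomial.X ^ p.natDegree := by
        conv_lhs => rw [← Polynomial.eraseLead_add_C_mul_X_pow p]
        rw [he0, zero_add]
      conv_lhs => rw [this]
      exact hlead
    case neg =>
      have hlt : p.eraseLead.natDegree < p.natDegree :=
        (Polynomial.eraseLead_natDegree_lt_or_eraseLead_eq_zero p).resolve_right he0
      have ihe := ih p.eraseLead.natDegree (hd ▸ hlt) p.eraseLead he0 rfl
      have hsm : ‖polyEmb Fq C p.eraseLead‖ < (Fintype.card Fq : ℝ) ^ ((p.natDegree : ℝ)) := by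
        rw [ihe]
        exact Real.rpow_lt_rpow_of_exponent_lt hQ1 (by exact_mod_cast hlt)
      calc ‖polyEmb Fq C p‖
          = ‖polyEmb Fq C p.eraseLead + polyEmb Fq C (Polynomial.C p.leadingCoeff * Polynomial.X ^ p.natDegree)‖ := by
            rw [← map_add, Polynomial.eraseLead_add_C_mul_X_pow]
        _ = _ := by rw [TV.una hna (by rw [hlead]; exact hsm), hlead]

lemma TV.pe_ne (hna : ∀ x y : C, ‖x + y‖ ≤ max ‖x‖ ‖y‖)
    (hext : ∀ x : LaurentSeries Fq, ‖algebraMap (LaurentSeries Fq) C x‖ = absK Fq x)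
    {p : Polynomial Fq} (hp : p ≠ 0) : polyEmb Fq C p ≠ 0 := by
  have := TV.norm_pe hna hext hp
  intro h0
  rw [h0, norm_zero] at this
  have hQ0 : (0:ℝ) < (Fintype.card Fq : ℝ) := by
    have : (1:ℝ) < (Fintype.card Fq : ℝ) := by exact_mod_cast Fintype.one_lt_card
    linarith
  exact absurd this.symm (ne_of_gt (Real.rpow_pos_of_pos hQ0 _))

lemma TV.aeval_ne (hna : ∀ x y : C, ‖x + y‖ ≤ max ‖x‖ ‖y‖)
    (hext : ∀ x : LaurentSeries Fq, ‖algebraMap (LaurentSeries Fq) C x‖ = absK Fq x)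
    {p : Polynomial Fq} (hp : p ≠ 0) : (Polynomial.aeval (Tel Fq) p : LaurentSeries Fq) ≠ 0 := by
  intro h0
  apply TV.pe_ne hna hext hp (C := C)
  rw [TV.pe_apply, h0, map_zero]

lemma TV.norm_unit (hna : ∀ x y : C, ‖x + y‖ ≤ max ‖x‖ ‖y‖)
    (hext : ∀ x : LaurentSeries Fq, ‖algebraMap (LaurentSeries Fq) C x‖ = absK Fq x)
    {p : Polynomial Fq} (hp : IsUnit p) : ‖polyEmb Fq C p‖ = 1 := by
  obtain ⟨a, ha, rfl⟩ := Polynomial.isUnit_iff.mp hp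
  exact TV.norm_peC hext (by rintro rfl; exact (not_isUnit_zero ha))

end Aux2

section Aux3
set_option linter.unusedSectionVars false
variable {Fq : Type*} [Field Fq] [Fintype Fq] {C : Type*} [NormedField C]
  [Algebra (LaurentSeries Fq) C]

lemma TV.rpow_injOn (hQ1 : (1:ℝ) < (Fintype.card Fq : ℝ)) {x y : ℝ}
    (h : (Fintype.card Fq : ℝ) ^ x = (Fintype.card Fq : ℝ) ^ y) : x = y := by
  by_contra hne
  rcases lt_or_gt_of_ne hne with hlt | hlt
  · exact absurd h (ne_of_lt ((Real.rpow_lt_rpow_left_iff hQ1).mpr hlt))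
  · exact absurd h.symm (ne_of_lt ((Real.rpow_lt_rpow_left_iff hQ1).mpr hlt))

/-- The key "max" formula for `‖e y * ω + e z‖` when `‖ω‖ = q^r`, `r` non-integral. -/
lemma TV.norm_lin (hna : ∀ x y : C, ‖x + y‖ ≤ max ‖x‖ ‖y‖)
    (hext : ∀ x : LaurentSeries Fq, ‖algebraMap (LaurentSeries Fq) C x‖ = absK Fq x)
    {r : ℚ} (hr : ∀ m : ℤ, r ≠ (m : ℚ)) {ω : C}
    (hωabs : ‖ω‖ = (Fintype.card Fq : ℝ) ^ (r : ℝ))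
    (y z : LaurentSeries Fq) (h : ¬(y = 0 ∧ z = 0)) :
    ‖algebraMap (LaurentSeries Fq) C y * ω + algebraMap (LaurentSeries Fq) C z‖
      = max (‖algebraMap (LaurentSeries Fq) C y‖ * (Fintype.card Fq : ℝ) ^ (r : ℝ))
          ‖algebraMap (LaurentSeries Fq) C z‖ := by
  have hQ1 : (1:ℝ) < (Fintype.card Fq : ℝ) := by exact_mod_cast Fintype.one_lt_card
  by_cases hy : y = 0
  · subst hy
    simp only [map_zero, zero_mul, zero_add, norm_zero]
    exact (max_eq_right (norm_nonneg _)).symm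
  by_cases hz : z = 0
  · subst hz
    simp only [map_zero, add_zero, norm_mul, norm_zero, hωabs]
    exact (max_eq_left (by positivity)).symm
  · have hyv := TV.norm_e hext hy
    have hzv := TV.norm_e hext hz
    have hmulv : ‖algebraMap (LaurentSeries Fq) C y * ω‖
        = (Fintype.card Fq : ℝ) ^ (((-(HahnSeries.order y) : ℤ) : ℝ) + (r:ℝ)) := by
      rw [norm_mul, hyv, hωabs, Real.rpow_add (lt_trans one_pos hQ1)]
    have hne : ‖algebraMap (LaurentSeries Fq) C y * ω‖ ≠ ‖algebraMap (LaurentSeries Fq) C z‖ := by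
      rw [hmulv, hzv]
      intro hcon
      have := TV.rpow_injOn hQ1 hcon
      apply hr ((-(HahnSeries.order z) : ℤ) - (-(HahnSeries.order y) : ℤ))
      have : (r : ℝ) = ((-(HahnSeries.order z) : ℤ) : ℝ) - ((-(HahnSeries.order y) : ℤ) : ℝ) := by
        linarith
      exact_mod_cast this
    rcases lt_or_gt_of_ne hne with hlt | hlt
    · rw [TV.una hna hlt]
      refine (max_eq_right ?_).symm
      rw [← hωabs, ← norm_mul]; exact hlt.le
    · rw [add_comm, TV.una hna hlt, norm_mul, hωabs]
      refine (max_eq_left ?_).symm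
      rw [← hωabs, ← norm_mul]; exact hlt.le

lemma TV.norm_lin_pos (hna : ∀ x y : C, ‖x + y‖ ≤ max ‖x‖ ‖y‖)
    (hext : ∀ x : LaurentSeries Fq, ‖algebraMap (LaurentSeries Fq) C x‖ = absK Fq x)
    {r : ℚ} (hr : ∀ m : ℤ, r ≠ (m : ℚ)) {ω : C}
    (hωabs : ‖ω‖ = (Fintype.card Fq : ℝ) ^ (r : ℝ))
    (y z : LaurentSeries Fq) (h : ¬(y = 0 ∧ z = 0)) :
    0 < ‖algebraMap (LaurentSeries Fq) C y * ω + algebraMap (LaurentSeries Fq) C z‖ := by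
  have hQ0 : (0:ℝ) < (Fintype.card Fq : ℝ) := by
    have : (1:ℝ) < (Fintype.card Fq : ℝ) := by exact_mod_cast Fintype.one_lt_card
    linarith
  rw [TV.norm_lin hna hext hr hωabs y z h]
  by_cases hy : y = 0
  · have hz : z ≠ 0 := by tauto
    have : (0:ℝ) < ‖algebraMap (LaurentSeries Fq) C z‖ := by
      rw [TV.norm_e hext hz]; exact Real.rpow_pos_of_pos hQ0 _
    exact lt_max_of_lt_right this
  · have : (0:ℝ) < ‖algebraMap (LaurentSeries Fq) C y‖ * (Fintype.card Fq : ℝ) ^ (r:ℝ) := by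
      apply mul_pos _ (Real.rpow_pos_of_pos hQ0 _)
      rw [TV.norm_e hext hy]; exact Real.rpow_pos_of_pos hQ0 _
    exact lt_max_of_lt_left this

lemma TV.imNorm_le {z : C} (x : LaurentSeries Fq) :
    imNorm Fq z ≤ ‖z - algebraMap (LaurentSeries Fq) C x‖ := by
  unfold imNorm
  exact ciInf_le ⟨0, by rintro b ⟨x', rfl⟩; exact norm_nonneg _⟩ x

lemma TV.le_imNorm {z : C} {b : ℝ}
    (h : ∀ x : LaurentSeries Fq, b ≤ ‖z - algebraMap (LaurentSeries Fq) C x‖) :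
    b ≤ imNorm Fq z := by
  unfold imNorm
  exact le_ciInf h

/-- ultrametric product perturbation bound -/
lemma TV.prod_perturb (hna : ∀ x y : C, ‖x + y‖ ≤ max ‖x‖ ‖y‖)
    {ι : Type*} (f g : ι → C) {ε : ℝ} (hε0 : 0 ≤ ε) (hε : ε ≤ 1)
    (h : ∀ i, ‖g i - f i‖ ≤ ε * ‖f i‖) (F : Finset ι) :
    ‖∏ i ∈ F, g i - ∏ i ∈ F, f i‖ ≤ ε * ‖∏ i ∈ F, f i‖ := by
  classical
  induction F using Finset.induction_on with
  | empty => simpa using hε0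
  | insert _ _ hi ih =>
    rename_i a F'
    rw [Finset.prod_insert hi, Finset.prod_insert hi]
    have hga : ‖g a‖ ≤ ‖f a‖ := by
      have h1 : ‖g a - f a‖ ≤ ‖f a‖ := (h a).trans (by nlinarith [norm_nonneg (f a)])
      calc ‖g a‖ = ‖f a + (g a - f a)‖ := by ring_nf
        _ ≤ max ‖f a‖ ‖g a - f a‖ := hna _ _
        _ ≤ ‖f a‖ := max_le le_rfl h1
    have hgF : ‖∏ i ∈ F', g i‖ ≤ ‖∏ i ∈ F', f i‖ := by
      rw [norm_prod, norm_prod]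
      apply Finset.prod_le_prod (fun i _ => norm_nonneg _)
      intro i _
      have h1 : ‖g i - f i‖ ≤ ‖f i‖ := (h i).trans (by nlinarith [norm_nonneg (f i)])
      calc ‖g i‖ = ‖f i + (g i - f i)‖ := by ring_nf
        _ ≤ max ‖f i‖ ‖g i - f i‖ := hna _ _
        _ ≤ ‖f i‖ := max_le le_rfl h1
    have hid : g a * ∏ i ∈ F', g i - f a * ∏ i ∈ F', f i
        = (g a - f a) * ∏ i ∈ F', g i + f a * (∏ i ∈ F', g i - ∏ i ∈ F', f i) := by ring
    rw [hid]
    refine (hna _ _).trans (max_le ?_ ?_)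
    · rw [norm_mul]
      calc ‖g a - f a‖ * ‖∏ i ∈ F', g i‖ ≤ (ε * ‖f a‖) * ‖∏ i ∈ F', f i‖ :=
            mul_le_mul (h a) hgF (norm_nonneg _) (by positivity)
        _ = ε * ‖f a * ∏ i ∈ F', f i‖ := by rw [norm_mul]; ring
    · rw [norm_mul]
      calc ‖f a‖ * ‖∏ i ∈ F', g i - ∏ i ∈ F', f i‖ ≤ ‖f a‖ * (ε * ‖∏ i ∈ F', f i‖) :=
            mul_le_mul_of_nonneg_left ih (norm_nonneg _)
        _ = ε * ‖f a * ∏ i ∈ F', f i‖ := by rw [norm_mul]; ring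

end Aux3

section Aux4
set_option linter.unusedSectionVars false
set_option maxHeartbeats 1000000
variable {Fq : Type*} [Field Fq] [Fintype Fq] {C : Type*} [NormedField C]
  [Algebra (LaurentSeries Fq) C]

lemma TV.lin_ne (hna : ∀ x y : C, ‖x + y‖ ≤ max ‖x‖ ‖y‖)
    (hext : ∀ x : LaurentSeries Fq, ‖algebraMap (LaurentSeries Fq) C x‖ = absK Fq x)
    {r : ℚ} (hr : ∀ m : ℤ, r ≠ (m : ℚ)) {ω : C}
    (hωabs : ‖ω‖ = (Fintype.card Fq : ℝ) ^ (r : ℝ))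
    {c d : Polynomial Fq} (h : ¬(c = 0 ∧ d = 0)) :
    0 < ‖polyEmb Fq C c * ω + polyEmb Fq C d‖ ∧ polyEmb Fq C c * ω + polyEmb Fq C d ≠ 0 := by
  have h' : ¬((Polynomial.aeval (Tel Fq) c : LaurentSeries Fq) = 0
      ∧ (Polynomial.aeval (Tel Fq) d : LaurentSeries Fq) = 0) := by
    rintro ⟨h1, h2⟩
    rcases not_and_or.mp h with hc | hd
    · exact TV.aeval_ne hna hext (C := C) hc h1
    · exact TV.aeval_ne hna hext (C := C) hd h2
  have hpos := TV.norm_lin_pos hna hext hr hωabs (Polynomial.aeval (Tel Fq) c)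
    (Polynomial.aeval (Tel Fq) d) h'
  have hpos' : 0 < ‖polyEmb Fq C c * ω + polyEmb Fq C d‖ := hpos
  exact ⟨hpos', fun h0 => by rw [h0, norm_zero] at hpos'; exact lt_irrefl _ hpos'⟩

lemma TV.not_both_zero {a' b' c' d' : Polynomial Fq} (hdet : IsUnit (a' * d' - b' * c')) :
    ¬(c' = 0 ∧ d' = 0) := by
  rintro ⟨rfl, rfl⟩
  simp only [mul_zero, zero_mul, sub_zero] at hdet
  exact not_isUnit_zero hdet

/-- The imaginary norm of a Möbius transform of `ω` is never an integral power of `q⁻¹`. -/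
lemma TV.imNorm_frac_ne (hna : ∀ x y : C, ‖x + y‖ ≤ max ‖x‖ ‖y‖)
    (hext : ∀ x : LaurentSeries Fq, ‖algebraMap (LaurentSeries Fq) C x‖ = absK Fq x)
    {r : ℚ} (hr : ∀ m : ℤ, r ≠ (m : ℚ)) {ω : C}
    (hωabs : ‖ω‖ = (Fintype.card Fq : ℝ) ^ (r : ℝ))
    (a' b' c' d' : Polynomial Fq) (hdet : IsUnit (a' * d' - b' * c')) (n : ℕ) :
    imNorm Fq ((polyEmb Fq C a' * ω + polyEmb Fq C b') / (polyEmb Fq C c' * ω + polyEmb Fq C d'))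
      ≠ (((Fintype.card Fq : ℝ)) ^ n)⁻¹ := by
  have hQ1 : (1:ℝ) < (Fintype.card Fq : ℝ) := by exact_mod_cast Fintype.one_lt_card
  have hQ0 : (0:ℝ) < (Fintype.card Fq : ℝ) := lt_trans one_pos hQ1
  have hcd := TV.not_both_zero hdet
  obtain ⟨hEpos0, hDne⟩ := TV.lin_ne hna hext hr hωabs (ω := ω) hcd
  have hdet0 : a' * d' - b' * c' ≠ 0 := hdet.ne_zero
  set q : ℝ := (Fintype.card Fq : ℝ) with hq
  set a'' : LaurentSeries Fq := Polynomial.aeval (Tel Fq) a' with ha''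
  set b'' : LaurentSeries Fq := Polynomial.aeval (Tel Fq) b' with hb''
  set c'' : LaurentSeries Fq := Polynomial.aeval (Tel Fq) c' with hc''
  set d'' : LaurentSeries Fq := Polynomial.aeval (Tel Fq) d' with hd''
  have hpa : polyEmb Fq C a' = algebraMap (LaurentSeries Fq) C a'' := rfl
  have hpb : polyEmb Fq C b' = algebraMap (LaurentSeries Fq) C b'' := rfl
  have hpc : polyEmb Fq C c' = algebraMap (LaurentSeries Fq) C c'' := rfl
  have hpd : polyEmb Fq C d' = algebraMap (LaurentSeries Fq) C d'' := rfl
  have hccdd : ¬(c'' = 0 ∧ d'' = 0) := by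
    rintro ⟨h1, h2⟩
    rcases not_and_or.mp hcd with hc | hd
    · exact TV.aeval_ne hna hext (C := C) hc h1
    · exact TV.aeval_ne hna hext (C := C) hd h2
  have hdet'' : a'' * d'' - b'' * c'' = Polynomial.aeval (Tel Fq) (a' * d' - b' * c') := by
    rw [ha'', hb'', hc'', hd'']; simp [mul_comm]
  have hdet''ne : a'' * d'' - b'' * c'' ≠ 0 := by
    rw [hdet'']; exact TV.aeval_ne hna hext (C := C) hdet0
  have hdetnorm : ‖algebraMap (LaurentSeries Fq) C (a'' * d'' - b'' * c'')‖ = 1 := by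
    rw [hdet'']
    exact TV.norm_unit hna hext hdet
  set w : C := (polyEmb Fq C a' * ω + polyEmb Fq C b') / (polyEmb Fq C c' * ω + polyEmb Fq C d')
    with hw
  set E : ℝ := ‖polyEmb Fq C c' * ω + polyEmb Fq C d'‖ with hE
  have hEpos : 0 < E := hEpos0
  have hqr : (0:ℝ) < q ^ (r:ℝ) := Real.rpow_pos_of_pos hQ0 _
  have hEmax : E = max (‖algebraMap (LaurentSeries Fq) C c''‖ * q ^ (r:ℝ))
      ‖algebraMap (LaurentSeries Fq) C d''‖ := by
    rw [hE, hpc, hpd]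
    exact TV.norm_lin hna hext hr hωabs _ _ hccdd
  -- the generic expression for w - e x
  have hsub : ∀ x : LaurentSeries Fq,
      w - algebraMap (LaurentSeries Fq) C x
        = (algebraMap (LaurentSeries Fq) C (a'' - x * c'') * ω
            + algebraMap (LaurentSeries Fq) C (b'' - x * d''))
          / (polyEmb Fq C c' * ω + polyEmb Fq C d') := by
    intro x
    rw [eq_div_iff hDne, sub_mul, hw, div_mul_cancel₀ _ hDne]
    rw [hpa, hpb, hpc, hpd, _root_.map_sub, _root_.map_sub, _root_.map_mul, _root_.map_mul]
    ring
  -- norms of the numerator, via norm_lin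
  have hnormnum : ∀ x : LaurentSeries Fq,
      ‖algebraMap (LaurentSeries Fq) C (a'' - x * c'') * ω
          + algebraMap (LaurentSeries Fq) C (b'' - x * d'')‖
        = max (‖algebraMap (LaurentSeries Fq) C (a'' - x * c'')‖ * q ^ (r:ℝ))
            ‖algebraMap (LaurentSeries Fq) C (b'' - x * d'')‖ := by
    intro x
    apply TV.norm_lin hna hext hr hωabs
    rintro ⟨h1, h2⟩
    apply hdet''ne
    have e1 : a'' = x * c'' := by rwa [sub_eq_zero] at h1
    have e2 : b'' = x * d'' := by rwa [sub_eq_zero] at h2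
    rw [e1, e2]; ring
  -- lower bound for the numerator norm
  have hlb : ∀ x : LaurentSeries Fq,
      q ^ (r:ℝ) / E ≤ ‖algebraMap (LaurentSeries Fq) C (a'' - x * c'') * ω
          + algebraMap (LaurentSeries Fq) C (b'' - x * d'')‖ := by
    intro x
    have hone : ‖algebraMap (LaurentSeries Fq) C (a'' - x * c'')
          * algebraMap (LaurentSeries Fq) C d''
        - algebraMap (LaurentSeries Fq) C (b'' - x * d'')
          * algebraMap (LaurentSeries Fq) C c''‖ = 1 := by
      rw [← _root_.map_mul, ← _root_.map_mul, ← _root_.map_sub]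
      rw [show (a'' - x * c'') * d'' - (b'' - x * d'') * c'' = a'' * d'' - b'' * c'' by ring]
      exact hdetnorm
    have hMXval := hnormnum x
    set MX : ℝ := ‖algebraMap (LaurentSeries Fq) C (a'' - x * c'') * ω
        + algebraMap (LaurentSeries Fq) C (b'' - x * d'')‖ with hMX
    have hMX0 : 0 ≤ MX := norm_nonneg _
    have e1 : ‖algebraMap (LaurentSeries Fq) C (a'' - x * c'')‖ * q ^ (r:ℝ) ≤ MX :=
      hMXval ▸ le_max_left _ _
    have e3 : ‖algebraMap (LaurentSeries Fq) C (b'' - x * d'')‖ ≤ MX :=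
      hMXval ▸ le_max_right _ _
    have e2 : ‖algebraMap (LaurentSeries Fq) C d''‖ ≤ E := hEmax ▸ le_max_right _ _
    have e4 : ‖algebraMap (LaurentSeries Fq) C c''‖ * q ^ (r:ℝ) ≤ E := hEmax ▸ le_max_left _ _
    have hstep1 : q ^ (r:ℝ) ≤ MX * E := by
      have s1 : (1:ℝ) ≤ max (‖algebraMap (LaurentSeries Fq) C (a'' - x * c'')‖
            * ‖algebraMap (LaurentSeries Fq) C d''‖)
          (‖algebraMap (LaurentSeries Fq) C (b'' - x * d'')‖
            * ‖algebraMap (LaurentSeries Fq) C c''‖) := by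
        rw [← hone]
        have := hna (algebraMap (LaurentSeries Fq) C (a'' - x * c'')
            * algebraMap (LaurentSeries Fq) C d'')
          (-(algebraMap (LaurentSeries Fq) C (b'' - x * d'')
            * algebraMap (LaurentSeries Fq) C c''))
        simpa [sub_eq_add_neg, norm_mul] using this
      rcases max_cases (‖algebraMap (LaurentSeries Fq) C (a'' - x * c'')‖
            * ‖algebraMap (LaurentSeries Fq) C d''‖)
          (‖algebraMap (LaurentSeries Fq) C (b'' - x * d'')‖
            * ‖algebraMap (LaurentSeries Fq) C c''‖) with ⟨hm, _⟩ | ⟨hm, _⟩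
      · rw [hm] at s1
        -- q^r ≤ q^r * (‖A‖ ‖D‖) ≤ (‖A‖ q^r) * ‖D‖ ≤ MX * E
        nlinarith [mul_le_mul e1 e2 (norm_nonneg _) hMX0, norm_nonneg
          (algebraMap (LaurentSeries Fq) C (a'' - x * c'')), norm_nonneg
          (algebraMap (LaurentSeries Fq) C d'')]
      · rw [hm] at s1
        nlinarith [mul_le_mul e3 e4 (by positivity) hMX0, norm_nonneg
          (algebraMap (LaurentSeries Fq) C (b'' - x * d'')), norm_nonneg
          (algebraMap (LaurentSeries Fq) C c'')]
    rw [div_le_iff₀ hEpos]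
    exact hstep1
  -- lower bound for imNorm
  have himlb : q ^ (r:ℝ) / E / E ≤ imNorm Fq w := by
    apply TV.le_imNorm
    intro x
    rw [hsub x, norm_div, ← hE]
    exact div_le_div_of_nonneg_right (hlb x) hEpos.le
  -- upper bound
  have himub : imNorm Fq w ≤ q ^ (r:ℝ) / E / E := by
    rcases max_choice (‖algebraMap (LaurentSeries Fq) C c''‖ * q ^ (r:ℝ))
        ‖algebraMap (LaurentSeries Fq) C d''‖ with hm | hm
    · -- E = ‖c''‖ q^r, c'' ≠ 0
      have hEeq : E = ‖algebraMap (LaurentSeries Fq) C c''‖ * q ^ (r:ℝ) := by rw [hEmax, hm]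
      have hcpos : 0 < ‖algebraMap (LaurentSeries Fq) C c''‖ := by
        rcases lt_or_eq_of_le (norm_nonneg (algebraMap (LaurentSeries Fq) C c'')) with h | h
        · exact h
        · exfalso; rw [hEeq, ← h, zero_mul] at hEpos; exact lt_irrefl _ hEpos
      have hc'0 : c'' ≠ 0 := by
        intro h0; rw [h0, map_zero, norm_zero] at hcpos; exact lt_irrefl _ hcpos
      refine (TV.imNorm_le (z := w) (a'' / c'')).trans ?_
      rw [hsub (a'' / c''), norm_div, ← hE]
      have hyA : a'' - a'' / c'' * c'' = 0 := by rw [div_mul_cancel₀ _ hc'0, sub_self]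
      have hyB : ‖algebraMap (LaurentSeries Fq) C (b'' - a'' / c'' * d'')‖
          = 1 / ‖algebraMap (LaurentSeries Fq) C c''‖ := by
        have h5 : b'' - a'' / c'' * d'' = (-(a'' * d'' - b'' * c'')) / c'' := by
          field_simp; ring
        rw [h5, map_div₀, norm_div, map_neg, norm_neg, hdetnorm]
      rw [hyA, map_zero, zero_mul, zero_add, hyB]
      apply div_le_div_of_nonneg_right _ hEpos.le
      rw [hEeq, div_le_div_iff₀ hcpos (by positivity)]
      have : (1:ℝ) * (‖algebraMap (LaurentSeries Fq) C c''‖ * q ^ (r:ℝ))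
          = q ^ (r:ℝ) * ‖algebraMap (LaurentSeries Fq) C c''‖ := by ring
      rw [this]
    · -- E = ‖d''‖, d'' ≠ 0
      have hEeq : E = ‖algebraMap (LaurentSeries Fq) C d''‖ := by rw [hEmax, hm]
      have hdpos : 0 < ‖algebraMap (LaurentSeries Fq) C d''‖ := by rw [← hEeq]; exact hEpos
      have hd'0 : d'' ≠ 0 := by
        intro h0; rw [h0, map_zero, norm_zero] at hdpos; exact lt_irrefl _ hdpos
      refine (TV.imNorm_le (z := w) (b'' / d'')).trans ?_
      rw [hsub (b'' / d''), norm_div, ← hE]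
      have hyB : b'' - b'' / d'' * d'' = 0 := by rw [div_mul_cancel₀ _ hd'0, sub_self]
      have hyA : ‖algebraMap (LaurentSeries Fq) C (a'' - b'' / d'' * c'')‖
          = 1 / ‖algebraMap (LaurentSeries Fq) C d''‖ := by
        have h5 : a'' - b'' / d'' * c'' = (a'' * d'' - b'' * c'') / d'' := by
          field_simp
        rw [h5, map_div₀, norm_div, hdetnorm]
      rw [hyB, map_zero, add_zero, norm_mul, hyA, hωabs]
      apply div_le_div_of_nonneg_right _ hEpos.le
      rw [hEeq]
      have : (1:ℝ) / ‖algebraMap (LaurentSeries Fq) C d''‖ * q ^ (r:ℝ)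
          = q ^ (r:ℝ) / ‖algebraMap (LaurentSeries Fq) C d''‖ := by ring
      rw [this]
  have himval : imNorm Fq w = q ^ (r:ℝ) / E / E := le_antisymm himub himlb
  rw [himval]
  intro hcon
  have hpowinv : ((q:ℝ) ^ n)⁻¹ = q ^ (-(n:ℝ)) := by
    rw [← Real.rpow_natCast q n, ← Real.rpow_neg hQ0.le]
  rcases max_choice (‖algebraMap (LaurentSeries Fq) C c''‖ * q ^ (r:ℝ))
      ‖algebraMap (LaurentSeries Fq) C d''‖ with hm | hm
  · have hEeq : E = ‖algebraMap (LaurentSeries Fq) C c''‖ * q ^ (r:ℝ) := by rw [hEmax, hm]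
    have hc'0 : c' ≠ 0 := by
      intro h0
      rw [hc'', h0] at hEeq
      simp only [map_zero, norm_zero, zero_mul] at hEeq
      exact (ne_of_gt hEpos) hEeq
    have hcval : ‖algebraMap (LaurentSeries Fq) C c''‖ = q ^ ((c'.natDegree : ℝ)) := by
      rw [← hpc]; exact TV.norm_pe hna hext hc'0
    rw [hEeq, hcval, ← Real.rpow_add hQ0, hpowinv, div_div, ← Real.rpow_add hQ0,
      ← Real.rpow_sub hQ0] at hcon
    have heq := TV.rpow_injOn hQ1 hcon
    apply hr ((n : ℤ) - 2 * (c'.natDegree : ℤ))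
    have : (r:ℝ) = (n:ℝ) - 2*(c'.natDegree:ℝ) := by linarith
    exact_mod_cast this
  · have hEeq : E = ‖algebraMap (LaurentSeries Fq) C d''‖ := by rw [hEmax, hm]
    have hd'0 : d' ≠ 0 := by
      intro h0
      rw [hd'', h0] at hEeq
      simp only [map_zero, norm_zero] at hEeq
      exact (ne_of_gt hEpos) hEeq
    have hdval : ‖algebraMap (LaurentSeries Fq) C d''‖ = q ^ ((d'.natDegree : ℝ)) := by
      rw [← hpd]; exact TV.norm_pe hna hext hd'0
    rw [hEeq, hdval, hpowinv, div_div, ← Real.rpow_add hQ0, ← Real.rpow_sub hQ0] at hcon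
    have heq := TV.rpow_injOn hQ1 hcon
    apply hr (2 * (d'.natDegree : ℤ) - (n : ℤ))
    have : (r:ℝ) = 2*(d'.natDegree:ℝ) - (n:ℝ) := by linarith
    exact_mod_cast this

end Aux4

section Aux5
set_option linter.unusedSectionVars false
set_option maxHeartbeats 1000000
variable {Fq : Type*} [Field Fq] [Fintype Fq] {C : Type*} [NormedField C]
  [Algebra (LaurentSeries Fq) C]

lemma TV.final_num {tq n1 d1 d2 sz s1 s2 κ κ' : ℝ} (hκ : 0 < κ) (hκ' : 0 < κ')
    (hd1 : 0 < d1) (hd2 : 0 < d2) (hsz : 0 < sz) (hs2 : 0 < s2) (htq : 0 ≤ tq) (hn1 : 0 ≤ n1)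
    (h1 : κ / d1 ≤ s1) (h2 : κ' / d2 ≤ sz) :
    tq * (n1 / (d1 * d2)) / (sz * s2) ≤ n1 / (κ * κ') * tq * (s1 / s2) := by
  have key1 : κ ≤ s1 * d1 := by rwa [div_le_iff₀ hd1] at h1
  have key2 : κ' ≤ sz * d2 := by rwa [div_le_iff₀ hd2] at h2
  have hs1 : 0 ≤ s1 := le_trans (le_of_lt (div_pos hκ hd1)) h1
  have e1 : tq * (n1 / (d1 * d2)) / (sz * s2) = (tq * n1) / (d1 * d2 * sz * s2) := by
    ring
  have e2 : n1 / (κ * κ') * tq * (s1 / s2) = (n1 * tq * s1) / (κ * κ' * s2) := by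
    ring
  rw [e1, e2, div_le_div_iff₀ (by positivity) (by positivity)]
  have base : κ * κ' ≤ (s1 * d1) * (sz * d2) :=
    mul_le_mul key1 key2 hκ'.le (mul_nonneg hs1 hd1.le)
  nlinarith [mul_le_mul_of_nonneg_left base (show (0:ℝ) ≤ tq * n1 * s2 by positivity)]

lemma TV.detγ (γ : GL (Fin 2) (Polynomial Fq)) :
    IsUnit (γ.val 0 0 * γ.val 1 1 - γ.val 0 1 * γ.val 1 0) := by
  have h := (Matrix.isUnit_iff_isUnit_det γ.val).mp γ.isUnit
  rwa [Matrix.det_fin_two] at h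

/-- The key uniform estimate. -/
lemma TV.key (hna : ∀ x y : C, ‖x + y‖ ≤ max ‖x‖ ‖y‖)
    (hext : ∀ x : LaurentSeries Fq, ‖algebraMap (LaurentSeries Fq) C x‖ = absK Fq x)
    {r : ℚ} (hr : ∀ m : ℤ, r ≠ (m : ℚ)) {ω : C}
    (hωabs : ‖ω‖ = (Fintype.card Fq : ℝ) ^ (r : ℝ))
    {ζ : C} (hζ : ‖ζ‖ = 1) (hζi : imNorm Fq ζ = 1)
    {s : C} {σ : LaurentSeries Fq} (hsσ : s = algebraMap (LaurentSeries Fq) C σ)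
    {κ κ' : ℝ} (hκ : 0 < κ) (hκ' : 0 < κ')
    (γ α : GL (Fin 2) (Polynomial Fq))
    (hlowγ : κ / ‖polyEmb Fq C (γ.val 1 0) * ω + polyEmb Fq C (γ.val 1 1)‖
      ≤ ‖s - act γ ω‖)
    (hlowγ' : κ' / ‖polyEmb Fq C (γ.val 1 0) * act α ω + polyEmb Fq C (γ.val 1 1)‖
      ≤ ‖s - act γ (act α ω)‖)
    (n : ℕ) :
    ‖(s + (polyEmb Fq C Polynomial.X)⁻¹ ^ n * ζ - act γ ω)
        / (s + (polyEmb Fq C Polynomial.X)⁻¹ ^ n * ζ - act γ (act α ω))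
      - (s - act γ ω) / (s - act γ (act α ω))‖
    ≤ ‖ω - act α ω‖ / (κ * κ') * (((Fintype.card Fq : ℝ)) ^ n)⁻¹
        * ‖(s - act γ ω) / (s - act γ (act α ω))‖ := by
  have hQ1 : (1:ℝ) < (Fintype.card Fq : ℝ) := by exact_mod_cast Fintype.one_lt_card
  have hQ0 : (0:ℝ) < (Fintype.card Fq : ℝ) := lt_trans one_pos hQ1
  set q : ℝ := (Fintype.card Fq : ℝ) with hq
  have hqn : (0:ℝ) < (q ^ n)⁻¹ := by positivity
  -- names for the matrix entries
  set aq := γ.val 0 0 with haq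
  set bq := γ.val 0 1 with hbq
  set cq := γ.val 1 0 with hcq
  set dq := γ.val 1 1 with hdq
  set Ap := α.val 0 0 with hAp
  set Bp := α.val 0 1 with hBp
  set Cp := α.val 1 0 with hCp
  set Dp := α.val 1 1 with hDp
  have hdetγ : IsUnit (aq * dq - bq * cq) := TV.detγ γ
  have hdetα : IsUnit (Ap * Dp - Bp * Cp) := TV.detγ α
  -- denominators
  obtain ⟨hDENpos, hDEN⟩ := TV.lin_ne hna hext hr hωabs (ω := ω) (TV.not_both_zero hdetα)
  obtain ⟨hD1pos, hD1⟩ := TV.lin_ne hna hext hr hωabs (ω := ω) (TV.not_both_zero hdetγ)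
  set DEN : C := polyEmb Fq C Cp * ω + polyEmb Fq C Dp with hDENdef
  set D1 : C := polyEmb Fq C cq * ω + polyEmb Fq C dq with hD1def
  -- the point X = αω
  set X : C := act α ω with hX0
  have hXdef : X = (polyEmb Fq C Ap * ω + polyEmb Fq C Bp) / DEN := rfl
  have hXD : X * DEN = polyEmb Fq C Ap * ω + polyEmb Fq C Bp := by
    rw [hXdef]; exact div_mul_cancel₀ _ hDEN
  -- entries of γ·α
  set a' := aq * Ap + bq * Cp with ha'
  set b' := aq * Bp + bq * Dp with hb'
  set c' := cq * Ap + dq * Cp with hc'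
  set d' := cq * Bp + dq * Dp with hd'
  have hdet' : IsUnit (a' * d' - b' * c') := by
    have : a' * d' - b' * c' = (aq * dq - bq * cq) * (Ap * Dp - Bp * Cp) := by
      rw [ha', hb', hc', hd']; ring
    rw [this]
    exact hdetγ.mul hdetα
  obtain ⟨hM'pos, hM'⟩ := TV.lin_ne hna hext hr hωabs (ω := ω) (TV.not_both_zero hdet')
  set M' : C := polyEmb Fq C c' * ω + polyEmb Fq C d' with hM'def
  set N' : C := polyEmb Fq C a' * ω + polyEmb Fq C b' with hN'def
  -- D2 = cq X + dq
  set D2 : C := polyEmb Fq C cq * X + polyEmb Fq C dq with hD2def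
  have hden2 : D2 * DEN = M' := by
    have e0 : D2 * DEN = polyEmb Fq C cq * (X * DEN) + polyEmb Fq C dq * DEN := by
      rw [hD2def]; ring
    rw [e0, hXD, hDENdef, hM'def, hc', hd']
    simp only [_root_.map_add, _root_.map_mul]
    ring
  have hD2 : D2 ≠ 0 := by
    intro h0
    rw [h0, zero_mul] at hden2
    exact hM' hden2.symm
  have hD2pos : 0 < ‖D2‖ := norm_pos_iff.mpr hD2
  -- w1 and w2
  set w1 : C := act γ ω with hw10
  have hw1 : w1 = (polyEmb Fq C aq * ω + polyEmb Fq C bq) / D1 := rfl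
  set w2 : C := act γ X with hw20
  have hw2 : w2 = (polyEmb Fq C aq * X + polyEmb Fq C bq) / D2 := rfl
  have hnum2 : (polyEmb Fq C aq * X + polyEmb Fq C bq) * DEN = N' := by
    have e0 : (polyEmb Fq C aq * X + polyEmb Fq C bq) * DEN
        = polyEmb Fq C aq * (X * DEN) + polyEmb Fq C bq * DEN := by ring
    rw [e0, hXD, hDENdef, hN'def, ha', hb']
    simp only [_root_.map_add, _root_.map_mul]
    ring
  have hw2' : w2 = N' / M' := by
    rw [hw2, ← hnum2, ← hden2, mul_div_mul_right _ _ hDEN]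
  -- lower bounds from the hypotheses
  have hS1 : κ / ‖D1‖ ≤ ‖s - w1‖ := hlowγ
  have hS2 : κ' / ‖D2‖ ≤ ‖s - w2‖ := hlowγ'
  have hS1pos : 0 < ‖s - w1‖ := lt_of_lt_of_le (div_pos hκ hD1pos) hS1
  have hS2pos : 0 < ‖s - w2‖ := lt_of_lt_of_le (div_pos hκ' hD2pos) hS2
  have hs2ne : s - w2 ≠ 0 := by
    intro h0; rw [h0, norm_zero] at hS2pos; exact lt_irrefl _ hS2pos
  -- the perturbation point z
  set t : C := (polyEmb Fq C Polynomial.X)⁻¹ ^ n * ζ with ht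
  have hpeXnorm : ‖polyEmb Fq C (Polynomial.X : Polynomial Fq)‖ = q := TV.norm_peX hext
  have htn : ‖t‖ = (q ^ n)⁻¹ := by
    rw [ht, norm_mul, norm_pow, norm_inv, hpeXnorm, hζ, mul_one, inv_pow]
  set z : C := s + t with hzdef
  -- lower bound for ‖z - w2‖
  have hzw2 : κ' / ‖D2‖ ≤ ‖z - w2‖ := by
    rcases lt_or_ge ((q ^ n)⁻¹) ‖s - w2‖ with hcase | hcase
    · have hzz : z - w2 = t + (s - w2) := by rw [hzdef]; ring
      rw [hzz, TV.una hna (x := t) (y := s - w2) (by rw [htn]; exact hcase)]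
      exact hS2
    · -- ‖s - w2‖ ≤ q^{-n} : use the imaginary-norm argument
      have himne : imNorm Fq w2 ≠ (q ^ n)⁻¹ := by
        rw [hw2', hN'def, hM'def]
        exact TV.imNorm_frac_ne hna hext hr hωabs a' b' c' d' hdet' n
      have himle : imNorm Fq w2 ≤ ‖s - w2‖ := by
        have := TV.imNorm_le (z := w2) σ
        rwa [← hsσ, norm_sub_rev] at this
      have himlt : imNorm Fq w2 < (q ^ n)⁻¹ :=
        lt_of_le_of_ne (le_trans himle hcase) himne
      obtain ⟨x₀, hx₀⟩ : ∃ x₀ : LaurentSeries Fq,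
          ‖w2 - algebraMap (LaurentSeries Fq) C x₀‖ < (q ^ n)⁻¹ := by
        have : (⨅ x : LaurentSeries Fq, ‖w2 - algebraMap (LaurentSeries Fq) C x‖)
            < (q ^ n)⁻¹ := himlt
        exact exists_lt_of_ciInf_lt this
      -- ‖t + e(σ - x₀)‖ ≥ q^{-n}
      have hbig : (q ^ n)⁻¹ ≤ ‖t + algebraMap (LaurentSeries Fq) C (σ - x₀)‖ := by
        have hTel : polyEmb Fq C (Polynomial.X : Polynomial Fq)
            = algebraMap (LaurentSeries Fq) C (Tel Fq) := by
          rw [TV.pe_apply, Polynomial.aeval_X]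
        have hTelC : algebraMap (LaurentSeries Fq) C (Tel Fq) ≠ 0 := by
          rw [← hTel]
          intro h0
          rw [h0, norm_zero] at hpeXnorm
          exact (ne_of_gt hQ0) hpeXnorm.symm
        have hiden : t + algebraMap (LaurentSeries Fq) C (σ - x₀)
            = (polyEmb Fq C (Polynomial.X : Polynomial Fq))⁻¹ ^ n
              * (ζ + algebraMap (LaurentSeries Fq) C ((Tel Fq) ^ n * (σ - x₀))) := by
          rw [mul_add, ← ht, hTel, _root_.map_mul, map_pow, ← mul_assoc, ← mul_pow,
            inv_mul_cancel₀ hTelC, one_pow, one_mul]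
        have hζlow : (1:ℝ) ≤ ‖ζ + algebraMap (LaurentSeries Fq) C ((Tel Fq) ^ n * (σ - x₀))‖ := by
          have h1 := TV.imNorm_le (z := ζ) (-((Tel Fq) ^ n * (σ - x₀)))
          rw [hζi, map_neg, sub_neg_eq_add] at h1
          exact h1
        rw [hiden, norm_mul, norm_pow, norm_inv, hpeXnorm, inv_pow]
        nlinarith [hζlow, hqn]
      have hzz : z - w2 = (t + algebraMap (LaurentSeries Fq) C (σ - x₀))
          - (w2 - algebraMap (LaurentSeries Fq) C x₀) := by
        rw [hzdef, hsσ, _root_.map_sub]; ring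
      rw [hzz, TV.unas hna (lt_of_lt_of_le hx₀ hbig)]
      exact le_trans hS2 (le_trans hcase hbig)
  have hzw2pos : 0 < ‖z - w2‖ := lt_of_lt_of_le (div_pos hκ' hD2pos) hzw2
  have hz2ne : z - w2 ≠ 0 := by
    intro h0; rw [h0, norm_zero] at hzw2pos; exact lt_irrefl _ hzw2pos
  -- the difference of the Möbius images
  have hΔ : w1 - w2 = (polyEmb Fq C aq * polyEmb Fq C dq - polyEmb Fq C bq * polyEmb Fq C cq)
      * (ω - X) / (D1 * D2) := by
    rw [eq_div_iff (mul_ne_zero hD1 hD2)]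
    have e1 : w1 * D1 = polyEmb Fq C aq * ω + polyEmb Fq C bq := by
      rw [hw1]; exact div_mul_cancel₀ _ hD1
    have e2 : w2 * D2 = polyEmb Fq C aq * X + polyEmb Fq C bq := by
      rw [hw2]; exact div_mul_cancel₀ _ hD2
    calc (w1 - w2) * (D1 * D2) = (w1 * D1) * D2 - (w2 * D2) * D1 := by ring
      _ = (polyEmb Fq C aq * ω + polyEmb Fq C bq) * D2
          - (polyEmb Fq C aq * X + polyEmb Fq C bq) * D1 := by rw [e1, e2]
      _ = _ := by rw [hD1def, hD2def]; ring
  have hdetnorm : ‖polyEmb Fq C aq * polyEmb Fq C dq - polyEmb Fq C bq * polyEmb Fq C cq‖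
      = 1 := by
    rw [← _root_.map_mul, ← _root_.map_mul, ← _root_.map_sub]
    exact TV.norm_unit hna hext hdetγ
  have hΔnorm : ‖w1 - w2‖ = ‖ω - X‖ / (‖D1‖ * ‖D2‖) := by
    rw [hΔ, norm_div, norm_mul, hdetnorm, one_mul, norm_mul]
  -- the difference of the two quotients
  have hdiff : (z - w1) / (z - w2) - (s - w1) / (s - w2)
      = t * (w1 - w2) / ((z - w2) * (s - w2)) := by
    rw [div_sub_div _ _ hz2ne hs2ne]
    congr 1
    have : z = s + t := hzdef
    rw [this]; ring
  -- put everything together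
  have hgoal : ‖(z - w1) / (z - w2) - (s - w1) / (s - w2)‖
      ≤ ‖ω - X‖ / (κ * κ') * ((q ^ n)⁻¹) * ‖(s - w1) / (s - w2)‖ := by
    rw [hdiff, norm_div, norm_mul, htn, norm_mul, hΔnorm, norm_div]
    exact TV.final_num hκ hκ' hD1pos hD2pos hzw2pos hS2pos (le_of_lt hqn)
      (norm_nonneg _) hS1 hzw2
  exact hgoal

end Aux5

/-- The subgroup `Z` of scalar matrices of `GL₂`. -/
def scalars (R : Type*) [CommRing R] : Subgroup (GL (Fin 2) R) :=
  (Units.map (Matrix.scalar (Fin 2)).toMonoidHom).range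

/-- **Theorem 5.1 (analytic content).**  With `ω` of irrational absolute value,
`z_n = s + T^{-n}·ζ`, and lower bounds (a) for `|s - γω|` and `|s - γ(αω)|`, if the
family `γ ↦ (s - γω)/(s - γ(αω))` indexed by `Γ~ = Γ/(Γ ∩ Z)` has product `P`, if for
each `n` the family `γ ↦ (z_n - γω)/(z_n - γ(αω))` has product `P_n`, and if
`|P_n| ≤ M` for all `n`, then `P_n → P`:  the value of the theta quotient `u_α` at the
cusp `s` is given by the same infinite product evaluated at `s`. -/
theorem theta_value_at_cusp {Fq : Type*} [Field Fq] [Fintype Fq]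
    {C : Type*} [NormedField C] [CompleteSpace C] [Algebra (LaurentSeries Fq) C]
    (hna : ∀ x y : C, ‖x + y‖ ≤ max ‖x‖ ‖y‖)
    (hext : ∀ x : LaurentSeries Fq, ‖algebraMap (LaurentSeries Fq) C x‖ = absK Fq x)
    (Γ : Subgroup (GL (Fin 2) (Polynomial Fq))) (α : GL (Fin 2) (Polynomial Fq)) (hα : α ∈ Γ)
    (ω : C) (r : ℚ) (hr : ∀ m : ℤ, r ≠ (m : ℚ))
    (hωabs : ‖ω‖ = (Fintype.card Fq : ℝ) ^ (r : ℝ))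
    (hωi : imNorm Fq ω = (Fintype.card Fq : ℝ) ^ (r : ℝ))
    (s : C) (hs : ∃ p u : Polynomial Fq, u ≠ 0 ∧ s = polyEmb Fq C p / polyEmb Fq C u)
    (ζ : C) (hζ : ‖ζ‖ = 1) (hζi : imNorm Fq ζ = 1)
    (zseq : ℕ → C) (hz : ∀ n : ℕ, zseq n = s + (polyEmb Fq C Polynomial.X)⁻¹ ^ n * ζ)
    (κ κ' : ℝ) (hκ : 0 < κ) (hκ' : 0 < κ')
    (hlow : ∀ γ ∈ Γ, κ / ‖polyEmb Fq C (γ.val 1 0) * ω + polyEmb Fq C (γ.val 1 1)‖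
      ≤ ‖s - act γ ω‖)
    (hlow' : ∀ γ ∈ Γ, κ' / ‖polyEmb Fq C (γ.val 1 0) * act α ω + polyEmb Fq C (γ.val 1 1)‖
      ≤ ‖s - act γ (act α ω)‖)
    (f : (↥Γ ⧸ (scalars (Polynomial Fq)).subgroupOf Γ) → C)
    (hf : ∀ γ : ↥Γ, f (QuotientGroup.mk γ)
      = (s - act γ.val ω) / (s - act γ.val (act α ω)))
    (P : C) (hP : HasProd f P)
    (fn : ℕ → (↥Γ ⧸ (scalars (Polynomial Fq)).subgroupOf Γ) → C)
    (hfn : ∀ (n : ℕ) (γ : ↥Γ), fn n (QuotientGroup.mk γ)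
      = (zseq n - act γ.val ω) / (zseq n - act γ.val (act α ω)))
    (Pseq : ℕ → C) (hPn : ∀ n : ℕ, HasProd (fn n) (Pseq n))
    (M : ℝ) (hM : 0 < M) (hPM : ∀ n : ℕ, ‖Pseq n‖ ≤ M) :
    Filter.Tendsto Pseq Filter.atTop (nhds P) := by
  have hQ1 : (1:ℝ) < (Fintype.card Fq : ℝ) := by exact_mod_cast Fintype.one_lt_card
  have hQ0 : (0:ℝ) < (Fintype.card Fq : ℝ) := lt_trans one_pos hQ1
  set Q : ℝ := (Fintype.card Fq : ℝ) with hQdef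
  obtain ⟨p, u, hu, hseq⟩ := hs
  set σ : LaurentSeries Fq := Polynomial.aeval (Tel Fq) p / Polynomial.aeval (Tel Fq) u with hσ
  have hsσ : s = algebraMap (LaurentSeries Fq) C σ := by
    rw [hseq, hσ, map_div₀]; rfl
  set Cc : ℝ := ‖ω - act α ω‖ / (κ * κ') with hCc
  have hCc0 : 0 ≤ Cc := div_nonneg (norm_nonneg _) (le_of_lt (mul_pos hκ hκ'))
  have key : ∀ (n : ℕ) (i : ↥Γ ⧸ (scalars (Polynomial Fq)).subgroupOf Γ),
      ‖fn n i - f i‖ ≤ Cc * (Q ^ n)⁻¹ * ‖f i‖ := by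
    intro n i
    obtain ⟨γ, rfl⟩ := QuotientGroup.mk_surjective i
    rw [hf γ, hfn n γ, hz n]
    exact TV.key hna hext hr hωabs hζ hζi hsσ hκ hκ' γ.val α
      (hlow γ.val γ.2) (hlow' γ.val γ.2) n
  have hPest : ∀ n : ℕ, Cc * (Q ^ n)⁻¹ ≤ 1 → ‖Pseq n - P‖ ≤ Cc * (Q ^ n)⁻¹ * ‖P‖ := by
    intro n hn
    have hbF : ∀ F : Finset (↥Γ ⧸ (scalars (Polynomial Fq)).subgroupOf Γ),
        ‖∏ i ∈ F, fn n i - ∏ i ∈ F, f i‖ ≤ Cc * (Q ^ n)⁻¹ * ‖∏ i ∈ F, f i‖ :=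
      TV.prod_perturb hna f (fn n) (by positivity) hn (key n)
    have hProdP : Filter.Tendsto
        (fun F : Finset (↥Γ ⧸ (scalars (Polynomial Fq)).subgroupOf Γ) => ∏ i ∈ F, f i)
        Filter.atTop (nhds P) := hP
    have hProdPn : Filter.Tendsto
        (fun F : Finset (↥Γ ⧸ (scalars (Polynomial Fq)).subgroupOf Γ) => ∏ i ∈ F, fn n i)
        Filter.atTop (nhds (Pseq n)) := hPn n
    have t1 : Filter.Tendsto
        (fun F : Finset (↥Γ ⧸ (scalars (Polynomial Fq)).subgroupOf Γ) =>
          ‖∏ i ∈ F, fn n i - ∏ i ∈ F, f i‖)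
        Filter.atTop (nhds ‖Pseq n - P‖) := (hProdPn.sub hProdP).norm
    have t2 : Filter.Tendsto
        (fun F : Finset (↥Γ ⧸ (scalars (Polynomial Fq)).subgroupOf Γ) =>
          Cc * (Q ^ n)⁻¹ * ‖∏ i ∈ F, f i‖)
        Filter.atTop (nhds (Cc * (Q ^ n)⁻¹ * ‖P‖)) := hProdP.norm.const_mul _
    exact le_of_tendsto_of_tendsto' t1 t2 hbF
  have hgeo : Filter.Tendsto (fun n : ℕ => (Q⁻¹) ^ n) Filter.atTop (nhds 0) :=
    tendsto_pow_atTop_nhds_zero_of_lt_one (by positivity)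
      (by rw [inv_lt_one_iff₀]; right; exact hQ1)
  have hdecay : Filter.Tendsto (fun n : ℕ => Cc * (Q ^ n)⁻¹) Filter.atTop (nhds 0) := by
    have := hgeo.const_mul Cc
    rw [mul_zero] at this
    simpa [inv_pow] using this
  have hEv1 : ∀ᶠ n in Filter.atTop, Cc * (Q ^ n)⁻¹ ≤ 1 :=
    hdecay.eventually (ge_mem_nhds zero_lt_one)
  have hEv : ∀ᶠ n in Filter.atTop, ‖Pseq n - P‖ ≤ (Cc * ‖P‖) * (Q⁻¹) ^ n := by
    filter_upwards [hEv1] with n hn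
    have h1 := hPest n hn
    calc ‖Pseq n - P‖ ≤ Cc * (Q ^ n)⁻¹ * ‖P‖ := h1
      _ = (Cc * ‖P‖) * (Q⁻¹) ^ n := by rw [inv_pow]; ring
  have hzero : Filter.Tendsto (fun n => Pseq n - P) Filter.atTop (nhds 0) := by
    apply squeeze_zero_norm' hEv
    have := hgeo.const_mul (Cc * ‖P‖)
    rwa [mul_zero] at this
  have := hzero.add_const P
  simpa using this
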